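/- For each integer n ≥ 3, let θ*ₙ ∈ (0,1) denote the unique zero of I_n(θ) = θ·log(1−θ) + n(θ + (1−θ)log(1−θ)) in (0,1), and set pˢₙ = h(θ*ₙ). Then: (i) θ*ₙ is strictly increasing in n and θ*ₙ → 1 as n → ∞; (ii) pˢₙ is strictly decreasing in n and pˢₙ → 0 as n → ∞; (iii) for any fixed p ∈ (0,1), for all n with p > pˢₙ the quantity kₙ = (p − pˢₙ)/(1 − pˢₙ) is strictly increasing in n and kₙ → p as n → ∞. -/

import Mathlib

/-!
Write `I_n(θ) = θ log(1-θ) + n g(θ)` with `g(θ) = θ + (1-θ) log(1-θ) > 0` on `(0,1)`, so that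
`I_n(θ)` increases with `n`. Since `I_n → -∞` at `1` and `θ*ₙ` is its only zero in `(0,1)`, the
intermediate value theorem shows that `I_n` can be positive only to the left of `θ*ₙ`. Hence
`I_n(θ*ₘ) = (n - m) g(θ*ₘ) > 0` gives `θ*ₘ < θ*ₙ`, and for fixed `a < 1` the divergence
`I_n(a) → ∞` gives `θ*ₙ > a` for large `n`. Parts (ii) and (iii) follow because `h` is continuous
and strictly decreasing with `h 1 = 0`, and `kₙ = 1 - (1-p)/(1-pˢₙ)`.
-/

open Filter Set Topology

/-- `h(θ) = (1−θ)(1−log(1−θ))`, with `h 1 = 0` automatic since `Real.log 0 = 0`. -/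
noncomputable def h (θ : ℝ) : ℝ := (1 - θ) * (1 - Real.log (1 - θ))

noncomputable def I (n : ℕ) (θ : ℝ) : ℝ :=
  θ * Real.log (1 - θ) + n * (θ + (1 - θ) * Real.log (1 - θ))

lemma sub_one_lt_mul_log {x : ℝ} (hx0 : 0 < x) (hx1 : x ≠ 1) : x - 1 < x * Real.log x := by
  have hlog := Real.log_lt_sub_one_of_pos (inv_pos.2 hx0) (inv_ne_one.2 hx1)
  rw [Real.log_inv] at hlog
  have := mul_lt_mul_of_pos_left hlog hx0
  rw [mul_sub, mul_inv_cancel₀ hx0.ne'] at this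
  linarith

lemma add_one_sub_mul_log_one_sub_pos {θ : ℝ} (hθ : θ ∈ Ioo (0 : ℝ) 1) :
    0 < θ + (1 - θ) * Real.log (1 - θ) := by
  have := sub_one_lt_mul_log (sub_pos.2 hθ.2) (sub_lt_self 1 hθ.1).ne
  linarith

lemma I_eq_I_add_mul (m n : ℕ) (θ : ℝ) :
    I n θ = I m θ + ((n : ℝ) - m) * (θ + (1 - θ) * Real.log (1 - θ)) := by
  simp only [I]
  ring

lemma I_pos_of_lt {m n : ℕ} {θ : ℝ} (hθ : θ ∈ Ioo (0 : ℝ) 1) (hzero : I m θ = 0) (hmn : m < n) :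
    0 < I n θ := by
  rw [I_eq_I_add_mul m n, hzero, zero_add]
  exact mul_pos (sub_pos.2 (by exact_mod_cast hmn)) (add_one_sub_mul_log_one_sub_pos hθ)

lemma eventually_I_pos {θ : ℝ} (hθ : θ ∈ Ioo (0 : ℝ) 1) : ∀ᶠ n in atTop, 0 < I n θ := by
  have hdiv : Tendsto (fun n : ℕ => I 0 θ + n * (θ + (1 - θ) * Real.log (1 - θ))) atTop atTop :=
    tendsto_atTop_add_const_left _ _
      (tendsto_natCast_atTop_atTop.atTop_mul_const (add_one_sub_mul_log_one_sub_pos hθ))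
  filter_upwards [hdiv.eventually_gt_atTop 0] with n hn
  rwa [I_eq_I_add_mul 0 n, Nat.cast_zero, sub_zero]

lemma continuousOn_I (n : ℕ) : ContinuousOn (I n) (Iio 1) := by
  unfold I
  fun_prop (disch := intro θ hθ; simp only [mem_Iio] at hθ; linarith)

lemma I_neg {n : ℕ} {θ : ℝ} (hθ : θ ∈ Ico (1 / 2 : ℝ) 1) (hlog : Real.log (1 - θ) < -2 * n) :
    I n θ < 0 := by
  obtain ⟨hθ0, hθ1⟩ := hθ
  have hn : (0 : ℝ) ≤ n := n.cast_nonneg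
  simp only [I]
  nlinarith [mul_nonneg (mul_nonneg hn (sub_nonneg.2 hθ1.le)) (by linarith : 0 ≤ -Real.log (1 - θ)),
    mul_nonneg (sub_nonneg.2 hθ0) (by linarith : 0 ≤ -Real.log (1 - θ))]

lemma eventually_I_neg (n : ℕ) : ∀ᶠ θ in 𝓝[<] (1 : ℝ), I n θ < 0 := by
  have hb : max (1 / 2) (1 - Real.exp (-2 * n)) < 1 :=
    max_lt (by norm_num) (by linarith [Real.exp_pos (-2 * n)])
  filter_upwards [Ioo_mem_nhdsLT hb] with θ ⟨hlo, hθ1⟩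
  refine I_neg ⟨(le_max_left _ _).trans hlo.le, hθ1⟩ ?_
  rw [Real.log_lt_iff_lt_exp (by linarith)]
  linarith [le_max_right (1 / 2 : ℝ) (1 - Real.exp (-2 * n))]

/-- If `I n` had a positive value at some `θ ≥ t`, it would vanish again between `θ` and `1`. -/
lemma lt_of_I_pos {n : ℕ} {t θ : ℝ} (hunique : ∀ x ∈ Ioo (0 : ℝ) 1, I n x = 0 → x = t)
    (hθ : θ ∈ Ioo (0 : ℝ) 1) (hpos : 0 < I n θ) : θ < t := by
  by_contra! hle
  obtain ⟨b, hneg, hθb, hb1⟩ := ((eventually_I_neg n).and (Ioo_mem_nhdsLT hθ.2)).exists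
  obtain ⟨z, hz, hz0⟩ := intermediate_value_Ioo' hθb.le
    ((continuousOn_I n).mono fun x hx => hx.2.trans_lt hb1) ⟨hneg, hpos⟩
  have := hunique z ⟨hθ.1.trans hz.1, hz.2.trans hb1⟩ hz0
  linarith [hz.1]

lemma tendsto_one_of_unique_zero {θs : ℕ → ℝ} (hmem : ∀ᶠ n in atTop, θs n ∈ Ioo (0 : ℝ) 1)
    (hunique : ∀ᶠ n in atTop, ∀ θ ∈ Ioo (0 : ℝ) 1, I n θ = 0 → θ = θs n) :
    Tendsto θs atTop (𝓝 1) := by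
  refine tendsto_order.2 ⟨fun a ha => ?_, fun b hb => hmem.mono fun n hn => hn.2.trans hb⟩
  rcases le_or_gt a 0 with ha0 | ha0
  · exact hmem.mono fun n hn => ha0.trans_lt hn.1
  · filter_upwards [hunique, eventually_I_pos ⟨ha0, ha⟩] with n hu hpos
    exact lt_of_I_pos hu ⟨ha0, ha⟩ hpos

lemma h_eq_add_negMulLog (θ : ℝ) : h θ = (1 - θ) + Real.negMulLog (1 - θ) := by
  simp only [h, Real.negMulLog]
  ring

lemma continuous_h : Continuous h := by
  rw [funext h_eq_add_negMulLog]
  fun_prop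

lemma h_one : h 1 = 0 := by simp [h]

lemma strictAntiOn_h : StrictAntiOn h (Icc 0 1) := by
  have hmono : StrictMonoOn (fun u => u + Real.negMulLog u) (Icc 0 1) := by
    refine strictMonoOn_of_deriv_pos (convex_Icc 0 1) (by fun_prop) fun x hx => ?_
    rw [interior_Icc] at hx
    have hderiv : HasDerivAt (fun u => u + Real.negMulLog u) (1 + (-Real.log x - 1)) x :=
      (hasDerivAt_id x).add (Real.hasDerivAt_negMulLog hx.1.ne')
    rw [hderiv.deriv]
    linarith [Real.log_neg hx.1 hx.2]
  intro x hx y hy hxy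
  simp only [h_eq_add_negMulLog]
  exact hmono ⟨by linarith [hy.2], by linarith [hy.1]⟩ ⟨by linarith [hx.2], by linarith [hx.1]⟩
    (by linarith)

lemma sub_div_one_sub_lt {p q q' : ℝ} (hp : p < 1) (hq : q' < q) (hq1 : q < 1) :
    (p - q) / (1 - q) < (p - q') / (1 - q') := by
  rw [div_lt_div_iff₀ (by linarith) (by linarith)]
  nlinarith

/-- with `θ*ₙ` the unique zero of `I_n` in `(0,1)` (for `n ≥ 3`) and
`pˢₙ = h(θ*ₙ)`: (i) `θ*ₙ` is strictly increasing and tends to `1`;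
(ii) `pˢₙ` is strictly decreasing and tends to `0`; (iii) for fixed `p ∈ (0,1)`,
among `n` with `p > pˢₙ`, `kₙ = (p−pˢₙ)/(1−pˢₙ)` is strictly increasing and
`kₙ → p`. -/
theorem stmt5 (θs : ℕ → ℝ)
    (hmem : ∀ n, 3 ≤ n → θs n ∈ Set.Ioo (0:ℝ) 1)
    (hzero : ∀ n, 3 ≤ n → I n (θs n) = 0)
    (huniq : ∀ n, 3 ≤ n → ∀ θ ∈ Set.Ioo (0:ℝ) 1, I n θ = 0 → θ = θs n) :
    (∀ m n, 3 ≤ m → m < n → θs m < θs n) ∧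
    Tendsto θs atTop (nhds 1) ∧
    (∀ m n, 3 ≤ m → m < n → h (θs n) < h (θs m)) ∧
    Tendsto (fun n => h (θs n)) atTop (nhds 0) ∧
    (∀ p ∈ Set.Ioo (0:ℝ) 1,
      (∀ m n, 3 ≤ m → m < n → h (θs m) < p →
        (p - h (θs m)) / (1 - h (θs m)) < (p - h (θs n)) / (1 - h (θs n))) ∧
      Tendsto (fun n => (p - h (θs n)) / (1 - h (θs n))) atTop (nhds p)) := by
  have hθ : ∀ m n, 3 ≤ m → m < n → θs m < θs n := fun m n hm hmn =>
    lt_of_I_pos (huniq n (hm.trans hmn.le)) (hmem m hm) (I_pos_of_lt (hmem m hm) (hzero m hm) hmn)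
  have hθ1 : Tendsto θs atTop (𝓝 1) :=
    tendsto_one_of_unique_zero (eventually_atTop.2 ⟨3, hmem⟩) (eventually_atTop.2 ⟨3, huniq⟩)
  have hh : ∀ m n, 3 ≤ m → m < n → h (θs n) < h (θs m) := fun m n hm hmn =>
    strictAntiOn_h (Ioo_subset_Icc_self (hmem m hm))
      (Ioo_subset_Icc_self (hmem n (hm.trans hmn.le))) (hθ m n hm hmn)
  have hh0 : Tendsto (fun n => h (θs n)) atTop (𝓝 0) := h_one ▸ (continuous_h.tendsto 1).comp hθ1
  refine ⟨hθ, hθ1, hh, hh0, fun p hp => ⟨fun m n hm hmn hpm =>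
    sub_div_one_sub_lt hp.2 (hh m n hm hmn) (hpm.trans hp.2), ?_⟩⟩
  have hk := (tendsto_const_nhds (x := p)).sub hh0 |>.div
    ((tendsto_const_nhds (x := (1 : ℝ))).sub hh0) (by norm_num)
  rwa [sub_zero, sub_zero, div_one] at hk
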